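/- Let m be a positive natural number, let v ∈ ℝ^m with v_i ≠ 0 for every i, and let L : {-1,1}^m → ℝ be any function. Define the sign vector s ∈ {-1,1}^m by s_i = 1 if v_i > 0 and s_i = -1 otherwise. Then max_{g ∈ {-1,1}^m} ( t ∑_i g_i v_i + L(g) ) − t · max_{h ∈ {-1,1}^m} ∑_i h_i v_i tends to L(s) as t → +∞. -/

import Mathlib

/-!
The sign vector `s` is the unique maximizer of `g ↦ ∑ i, g i * v i` on the finite cube: any
other `g` disagrees with `s` at some `j` and loses `2 |v j| > 0` there. Once `t` exceeds the
spread of `L` divided by the smallest such gap, `s` also maximizes `t ∑ g i v i + L g`, so the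
difference in the statement is eventually equal to `L s`.
-/

open Filter Topology

def Hc (m : ℕ) : Set (Fin m → ℝ) := {h | ∀ i, h i = 1 ∨ h i = -1}

section UniqueMaximizer

variable {α : Type*} {S : Set α} {f g : α → ℝ} {a : α}

theorem Set.Finite.eventually_isGreatest_image_mul_add (hS : S.Finite) (ha : a ∈ S)
    (hmax : ∀ x ∈ S, x ≠ a → f x < f a) :
    ∀ᶠ t in atTop, IsGreatest ((fun x => t * f x + g x) '' S) (t * f a + g a) := by
  have hbound : ∀ᶠ t in atTop, ∀ x ∈ S, t * f x + g x ≤ t * f a + g a := by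
    rw [eventually_all_finite hS]
    intro x hx
    by_cases hxa : x = a
    · simp [hxa]
    have hgap : 0 < f a - f x := sub_pos.mpr (hmax x hx hxa)
    filter_upwards [eventually_ge_atTop ((g x - g a) / (f a - f x))] with t ht
    rw [div_le_iff₀ hgap] at ht
    linarith
  filter_upwards [hbound] with t ht
  refine ⟨⟨a, ha, rfl⟩, ?_⟩
  rintro _ ⟨x, hx, rfl⟩
  exact ht x hx

theorem Set.Finite.tendsto_sSup_image_mul_add_sub_mul_sSup (hS : S.Finite) (ha : a ∈ S)
    (hmax : ∀ x ∈ S, x ≠ a → f x < f a) :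
    Tendsto (fun t : ℝ => sSup ((fun x => t * f x + g x) '' S) - t * sSup (f '' S))
      atTop (𝓝 (g a)) := by
  have hf : sSup (f '' S) = f a := by
    refine IsGreatest.csSup_eq ⟨⟨a, ha, rfl⟩, ?_⟩
    rintro _ ⟨x, hx, rfl⟩
    rcases eq_or_ne x a with rfl | hxa
    exacts [le_rfl, (hmax x hx hxa).le]
  refine tendsto_const_nhds.congr' ?_
  filter_upwards [hS.eventually_isGreatest_image_mul_add (g := g) ha hmax] with t ht
  rw [ht.csSup_eq, hf]
  ring

end UniqueMaximizer

theorem Hc_finite (m : ℕ) : (Hc m).Finite := by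
  refine (Set.Finite.pi (t := fun _ : Fin m => ({1, -1} : Set ℝ)) fun _ => Set.toFinite _).subset ?_
  intro h hh i _
  exact hh i

theorem ite_pos_mem_Hc {m : ℕ} (v : Fin m → ℝ) : (fun i => if 0 < v i then 1 else -1) ∈ Hc m := by
  intro i
  dsimp only
  split_ifs <;> simp

theorem ite_pos_mul_self_eq_abs (x : ℝ) : (if 0 < x then 1 else -1) * x = |x| := by
  split_ifs with hx
  · rw [one_mul, abs_of_pos hx]
  · rw [neg_one_mul, abs_of_nonpos (not_lt.mp hx)]

theorem mul_le_abs_of_eq_one_or_eq_neg_one {ε : ℝ} (hε : ε = 1 ∨ ε = -1) (x : ℝ) :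
    ε * x ≤ |x| := by
  rcases hε with rfl | rfl
  · simpa using le_abs_self x
  · simpa using neg_le_abs x

theorem mul_lt_abs_of_ne_ite_pos {ε x : ℝ} (hε : ε = 1 ∨ ε = -1) (hx : x ≠ 0)
    (hne : ε ≠ if 0 < x then 1 else -1) : ε * x < |x| := by
  have hflip : ε = -(if 0 < x then 1 else -1) := by
    rcases hε with rfl | rfl <;> split_ifs at hne ⊢ <;> norm_num at *
  rw [hflip, neg_mul, ite_pos_mul_self_eq_abs]
  exact neg_lt_self (abs_pos.mpr hx)

theorem sum_mul_lt_sum_ite_pos_mul {m : ℕ} {v : Fin m → ℝ} (hv : ∀ i, v i ≠ 0) {g : Fin m → ℝ}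
    (hg : g ∈ Hc m) (hne : g ≠ fun i => if 0 < v i then 1 else -1) :
    ∑ i, g i * v i < ∑ i, (if 0 < v i then 1 else -1) * v i := by
  obtain ⟨j, hj⟩ := Function.ne_iff.mp hne
  simp only [ite_pos_mul_self_eq_abs]
  exact Finset.sum_lt_sum (fun i _ => mul_le_abs_of_eq_one_or_eq_neg_one (hg i) (v i))
    ⟨j, Finset.mem_univ j, mul_lt_abs_of_ne_ite_pos (hg j) (hv j) hj⟩

theorem stmt_7_general (m : ℕ) (v : Fin m → ℝ)
    (hv : ∀ i, v i ≠ 0) (L : (Fin m → ℝ) → ℝ) :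
    Filter.Tendsto
      (fun t : ℝ =>
        sSup ((fun g => t * ∑ i, g i * v i + L g) '' Hc m) -
          t * sSup ((fun h => ∑ i, h i * v i) '' Hc m))
      Filter.atTop
      (nhds (L (fun i => if 0 < v i then 1 else -1))) :=
  (Hc_finite m).tendsto_sSup_image_mul_add_sub_mul_sSup (ite_pos_mem_Hc v)
    fun _ hg hne => sum_mul_lt_sum_ite_pos_mul hv hg hne

/-- If no coordinate of `v` is zero, then as the scale `t → +∞`, the scaled
structured-prediction upper bound tends to the loss `L s` itself, where
`s i = 1` if `v i > 0` and `s i = -1` otherwise. -/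
theorem stmt_7 (m : ℕ) (hm : 0 < m) (v : Fin m → ℝ)
    (hv : ∀ i, v i ≠ 0) (L : (Fin m → ℝ) → ℝ) :
    Filter.Tendsto
      (fun t : ℝ =>
        sSup ((fun g => t * ∑ i, g i * v i + L g) '' Hc m) -
          t * sSup ((fun h => ∑ i, h i * v i) '' Hc m))
      Filter.atTop
      (nhds (L (fun i => if 0 < v i then 1 else -1))) :=
  stmt_7_general m v hv L
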